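/- Let φ be a solution on (0,∞) of φ'' + (2/r)φ' = sin(2φ)/r² + (φ − sin φ cos φ)(1 − cos 2φ)/r⁴. Then the function W(r) = r⁴ φ'(r)² − 2r² sin²φ(r) − (φ(r) − sin φ(r) cos φ(r))² satisfies W'(r) = −4r sin²φ(r); in particular W is nonincreasing, and strictly decreasing on any interval where sin φ does not vanish identically. -/

import Mathlib

/-!
Differentiating `W` and substituting the equation multiplied by `r⁴`, in the form
`r⁴ φ'' + 2 r³ φ' = r² sin 2φ + (φ − sin φ cos φ)(1 − cos 2φ)`, every term containing `φ'`
cancels: `(φ − sin φ cos φ)' = 2 φ' sin² φ`, so `W' = −4 r sin² φ ≤ 0`. Monotonicity follows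
from the mean value theorem, and if `W` took equal values at the ends of an interval it would be
constant there, so `W'`, and with it `sin φ`, would vanish throughout the interior.
-/

open Real Set

/-- The monotone quantity `W(r) = r⁴ φ'(r)² − 2r² sin²φ(r) − (φ(r) − sin φ(r) cos φ(r))²`. -/
noncomputable def Wfun (φ φ' : ℝ → ℝ) (r : ℝ) : ℝ :=
  r^4 * (φ' r)^2 - 2 * r^2 * Real.sin (φ r)^2 -
    (φ r - Real.sin (φ r) * Real.cos (φ r))^2

theorem AntitoneOn.lt_of_hasDerivAt_ne_zero {f : ℝ → ℝ} {a b r f'r : ℝ}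
    (hf : AntitoneOn f (Icc a b)) (hr : r ∈ Ioo a b) (hderiv : HasDerivAt f f'r r)
    (hne : f'r ≠ 0) : f b < f a := by
  have hab : a ≤ b := (hr.1.trans hr.2).le
  refine (hf ⟨le_rfl, hab⟩ ⟨hab, le_rfl⟩ hab).lt_of_ne fun hba ↦ hne ?_
  have hconst : ∀ x ∈ Ioo a b, f x = f b := fun x hx ↦
    le_antisymm (hba ▸ hf ⟨le_rfl, hab⟩ (Ioo_subset_Icc_self hx) hx.1.le)
      (hf (Ioo_subset_Icc_self hx) ⟨hab, le_rfl⟩ hx.2.le)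
  have hlocal : f =ᶠ[nhds r] fun _ ↦ f b :=
    Filter.eventually_of_mem (Ioo_mem_nhds hr.1 hr.2) hconst
  exact hderiv.unique ((hasDerivAt_const r (f b)).congr_of_eventuallyEq hlocal)

theorem hasDerivAt_Wfun {φ φ' : ℝ → ℝ} {r φ''r : ℝ} (h1 : HasDerivAt φ (φ' r) r)
    (h2 : HasDerivAt φ' φ''r r) :
    HasDerivAt (Wfun φ φ')
      (2 * φ' r * (r ^ 4 * φ''r + 2 * r ^ 3 * φ' r) - 4 * r * sin (φ r) ^ 2
        - 4 * r ^ 2 * sin (φ r) * cos (φ r) * φ' r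
        - 4 * (φ r - sin (φ r) * cos (φ r)) * sin (φ r) ^ 2 * φ' r) r := by
  have hsc : HasDerivAt (fun x ↦ φ x - sin (φ x) * cos (φ x)) (2 * sin (φ r) ^ 2 * φ' r) r := by
    refine (h1.sub (h1.sin.mul h1.cos)).congr_deriv ?_
    linear_combination -φ' r * Real.sin_sq_add_cos_sq (φ r)
  refine ((((hasDerivAt_pow 4 r).mul (h2.fun_pow 2)).sub
    (((hasDerivAt_pow 2 r).const_mul 2).mul (h1.sin.fun_pow 2))).sub (hsc.fun_pow 2)).congr_deriv ?_
  push_cast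
  ring

theorem hasDerivAt_Wfun_of_adkinsNappi {φ φ' : ℝ → ℝ} {r φ''r : ℝ} (hr : 0 < r)
    (h1 : HasDerivAt φ (φ' r) r) (h2 : HasDerivAt φ' φ''r r)
    (hode : φ''r + (2 / r) * φ' r =
      sin (2 * φ r) / r ^ 2 + (φ r - sin (φ r) * cos (φ r)) * (1 - cos (2 * φ r)) / r ^ 4) :
    HasDerivAt (Wfun φ φ') (-(4 * r * sin (φ r) ^ 2)) r := by
  have hode' : r ^ 4 * φ''r + 2 * r ^ 3 * φ' r =
      r ^ 2 * (2 * sin (φ r) * cos (φ r)) +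
        (φ r - sin (φ r) * cos (φ r)) * (2 * sin (φ r) ^ 2) := by
    field_simp at hode
    rw [sin_two_mul, cos_two_mul] at hode
    linear_combination hode - (φ r - sin (φ r) * cos (φ r)) * 2 * Real.sin_sq_add_cos_sq (φ r)
  convert hasDerivAt_Wfun h1 h2 using 1
  linear_combination (-2 * φ' r) * hode'

theorem stmt4 (φ φ' φ'' : ℝ → ℝ)
    (hd1 : ∀ r ∈ Set.Ioi (0:ℝ), HasDerivAt φ (φ' r) r)
    (hd2 : ∀ r ∈ Set.Ioi (0:ℝ), HasDerivAt φ' (φ'' r) r)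
    (heq : ∀ r ∈ Set.Ioi (0:ℝ),
      φ'' r + (2/r) * φ' r =
        Real.sin (2 * φ r) / r^2 +
          (φ r - Real.sin (φ r) * Real.cos (φ r)) * (1 - Real.cos (2 * φ r)) / r^4) :
    (∀ r ∈ Set.Ioi (0:ℝ), HasDerivAt (Wfun φ φ') (-(4 * r * Real.sin (φ r)^2)) r) ∧
    AntitoneOn (Wfun φ φ') (Set.Ioi 0) ∧
    (∀ a b : ℝ, 0 < a → a < b → (∃ r ∈ Set.Ioo a b, Real.sin (φ r) ≠ 0) →
      Wfun φ φ' b < Wfun φ φ' a) := by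
  have hW : ∀ r ∈ Ioi (0:ℝ), HasDerivAt (Wfun φ φ') (-(4 * r * sin (φ r) ^ 2)) r :=
    fun r hr ↦ hasDerivAt_Wfun_of_adkinsNappi hr (hd1 r hr) (hd2 r hr) (heq r hr)
  have hanti : AntitoneOn (Wfun φ φ') (Ioi 0) := by
    refine antitoneOn_of_hasDerivWithinAt_nonpos (f' := fun x ↦ -(4 * x * sin (φ x) ^ 2))
      (convex_Ioi 0)
      (fun x hx ↦ (hW x hx).continuousAt.continuousWithinAt) (fun x hx ↦ ?_) (fun x hx ↦ ?_)
    all_goals rw [interior_Ioi] at hx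
    · exact (hW x hx).hasDerivWithinAt
    · have : 0 < x := hx
      exact neg_nonpos.mpr (by positivity)
  refine ⟨hW, hanti, fun a b ha _ ⟨r, hr, hsin⟩ ↦ ?_⟩
  have hr0 : 0 < r := ha.trans hr.1
  refine (hanti.mono fun x hx ↦ ha.trans_le hx.1).lt_of_hasDerivAt_ne_zero hr (hW r hr0)
    (neg_ne_zero.mpr (by positivity))
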